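/- arXiv:2108.00185 — 2 statements merged into one kernel-verified Lean document; each statement's English description precedes it below -/
import Mathlib

section
/- Let R(i k₁, i k₂) = e^{i k₁} + i k₂ φ₁(i k₁) be the stability function of the partitioned exponential Euler method. Then for all real k₂ and all nonzero real k₁, | |R(i k₁, i k₂)| − 1 | ≤ 2 |k₂| / |k₁|. Hence for any fixed k₂, the magnitude of the instability (the excess of |R| above 1) tends to 0 as |k₁| → ∞: unlike explicit methods, the instabilities of the exponential integrator decrease in magnitude as k₁ increases. -/
open Complex

/-- The first exponential phi-function: φ₁(z) = (e^z − 1)/z for z ≠ 0, φ₁(0) = 1. -/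
noncomputable def phi1 (z : ℂ) : ℂ :=
  if z = 0 then 1 else (Complex.exp z - 1) / z

/-- Stability function of the partitioned exponential Euler method:
R(i k₁, i k₂) = e^{i k₁} + i k₂ φ₁(i k₁). -/
noncomputable def R (k₁ k₂ : ℝ) : ℂ :=
  Complex.exp (Complex.I * k₁) + Complex.I * k₂ * phi1 (Complex.I * k₁)

/-! Since `|e^{ik₁}| = 1`, the distance of `|R|` from `1` is at most the size of the perturbation
`i k₂ φ₁(i k₁)`, and `|φ₁(i k₁)| = |e^{ik₁} − 1| / |k₁| ≤ 2 / |k₁|`. -/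

theorem phi1_of_ne_zero {z : ℂ} (hz : z ≠ 0) : phi1 z = (exp z - 1) / z :=
  if_neg hz

theorem norm_exp_I_mul_ofReal_sub_one_le_two (x : ℝ) : ‖exp (I * x) - 1‖ ≤ 2 :=
  calc ‖exp (I * x) - 1‖ ≤ ‖exp (I * x)‖ + ‖(1 : ℂ)‖ := norm_sub_le _ _
    _ = 2 := by rw [norm_exp_I_mul_ofReal, norm_one]; norm_num

theorem norm_I_mul_ofReal (x : ℝ) : ‖I * x‖ = |x| := by
  rw [norm_mul, norm_I, one_mul, norm_real, Real.norm_eq_abs]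

theorem norm_phi1_I_mul_ofReal_le {x : ℝ} (hx : x ≠ 0) : ‖phi1 (I * x)‖ ≤ 2 / |x| := by
  have hIx : I * (x : ℂ) ≠ 0 := mul_ne_zero I_ne_zero (ofReal_ne_zero.mpr hx)
  rw [phi1_of_ne_zero hIx, norm_div, norm_I_mul_ofReal]
  gcongr
  exact norm_exp_I_mul_ofReal_sub_one_le_two x

theorem abs_norm_sub_one_le_norm_sub {E : Type*} [SeminormedAddCommGroup E] {a b : E}
    (ha : ‖a‖ = 1) : |‖b‖ - 1| ≤ ‖b - a‖ :=
  ha ▸ abs_norm_sub_norm_le b a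

theorem R_sub_exp (k₁ k₂ : ℝ) :
    R k₁ k₂ - exp (I * k₁) = I * k₂ * phi1 (I * k₁) := by
  rw [R, add_sub_cancel_left]

theorem instability_decays_with_k1 (k₂ : ℝ) (k₁ : ℝ) (hk₁ : k₁ ≠ 0) :
    |‖R k₁ k₂‖ - 1| ≤ 2 * |k₂| / |k₁| :=
  calc |‖R k₁ k₂‖ - 1| ≤ ‖R k₁ k₂ - exp (I * k₁)‖ :=
        abs_norm_sub_one_le_norm_sub (norm_exp_I_mul_ofReal k₁)
    _ = |k₂| * ‖phi1 (I * k₁)‖ := by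
        rw [R_sub_exp, norm_mul, norm_I_mul_ofReal]
    _ ≤ |k₂| * (2 / |k₁|) := by gcongr; exact norm_phi1_I_mul_ofReal_le hk₁
    _ = 2 * |k₂| / |k₁| := by ring
end

section
/- Fix ε > 0 and consider the repartitioned exponential Euler stability function along the line k₂ = 0: for k₁ > 0, R̂(k₁, 0) = e^{(i−ε)k₁} + ε k₁ φ₁((i − ε) k₁), where φ₁(z) = (e^z − 1)/z. Then R̂(k₁, 0) → (ε² + i ε)/(1 + ε²) as k₁ → +∞, and the modulus of this limit is ε/√(1 + ε²) < 1. Hence after repartitioning, the high-frequency modes (large k₁) are strictly damped rather than merely marginally stable. -/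
open Complex Filter

/-!
Since `z φ₁(z) = e^z − 1`, the stability function along a ray `z = w k` collapses to the affine
expression `e^{wk} (1 + c/w) − c/w` in `e^{wk}`. When `Re w < 0` the exponential decays, so the
limit is `−c/w`; for `w = i − ε`, `c = ε` this is `ε/(ε − i)`, of modulus `ε/√(1 + ε²) < 1`.
-/

theorem mul_phi1 (z : ℂ) : z * phi1 z = exp z - 1 := by
  by_cases hz : z = 0
  · simp [hz]
  · rw [phi1, if_neg hz, mul_div_cancel₀ _ hz]

theorem tendsto_exp_mul_ofReal_atTop_zero {w : ℂ} (hw : w.re < 0) :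
    Tendsto (fun t : ℝ => exp (w * t)) atTop (nhds 0) := by
  rw [Complex.tendsto_exp_nhds_zero_iff]
  simp only [re_mul_ofReal]
  exact tendsto_id.const_mul_atTop_of_neg hw

theorem exp_add_mul_phi1_eq {w : ℂ} (hw : w ≠ 0) (c z : ℂ) :
    exp (w * z) + c * z * phi1 (w * z) = exp (w * z) * (1 + c / w) - c / w := by
  rw [show c * z * phi1 (w * z) = c / w * (w * z * phi1 (w * z)) by field_simp, mul_phi1]
  ring

theorem tendsto_exp_add_mul_phi1_atTop {w : ℂ} (hw : w.re < 0) (c : ℂ) :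
    Tendsto (fun t : ℝ => exp (w * t) + c * t * phi1 (w * t)) atTop (nhds (-c / w)) := by
  have hw0 : w ≠ 0 := by
    rintro rfl
    simp at hw
  simp_rw [exp_add_mul_phi1_eq hw0]
  simpa [neg_div] using
    ((tendsto_exp_mul_ofReal_atTop_zero hw).mul_const (1 + c / w)).sub_const (c / w)

theorem norm_ofReal_sub_I (x : ℝ) : ‖(x : ℂ) - I‖ = Real.sqrt (1 + x ^ 2) := by
  rw [sub_eq_add_neg, ← neg_one_mul I, ← ofReal_one, ← ofReal_neg, norm_add_mul_I]
  ring_nf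

theorem div_sqrt_one_add_sq_lt_one (x : ℝ) : x / Real.sqrt (1 + x ^ 2) < 1 := by
  rw [div_lt_one (by positivity)]
  calc x ≤ |x| := le_abs_self x
    _ = Real.sqrt (x ^ 2) := (Real.sqrt_sq_eq_abs x).symm
    _ < Real.sqrt (1 + x ^ 2) := Real.sqrt_lt_sqrt (sq_nonneg x) (lt_one_add _)

theorem neg_div_I_sub_ofReal (x : ℝ) :
    -(x : ℂ) / (I - x) = ((x : ℂ) ^ 2 + I * x) / (1 + (x : ℂ) ^ 2) := by
  have h₁ : I - (x : ℂ) ≠ 0 := fun h => by simpa using congrArg im h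
  have h₂ : 1 + (x : ℂ) ^ 2 ≠ 0 := by exact_mod_cast (by positivity : (1 : ℝ) + x ^ 2 ≠ 0)
  rw [div_eq_div_iff h₁ h₂]
  ring_nf
  rw [I_sq]
  ring

theorem repartitioned_stability_high_frequency_damping (ε : ℝ) (hε : 0 < ε) :
    Tendsto
        (fun k₁ : ℝ =>
          Complex.exp ((Complex.I - ε) * k₁)
            + (ε : ℂ) * k₁ * phi1 ((Complex.I - ε) * k₁))
        atTop
        (nhds (((ε : ℂ) ^ 2 + Complex.I * ε) / (1 + (ε : ℂ) ^ 2))) ∧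
      ‖((ε : ℂ) ^ 2 + Complex.I * ε) / (1 + (ε : ℂ) ^ 2)‖
        = ε / Real.sqrt (1 + ε ^ 2) ∧
      ε / Real.sqrt (1 + ε ^ 2) < 1 := by
  rw [← neg_div_I_sub_ofReal]
  refine ⟨tendsto_exp_add_mul_phi1_atTop (by simpa using hε) _, ?_, div_sqrt_one_add_sq_lt_one ε⟩
  rw [neg_div, ← div_neg, neg_sub, norm_div, norm_ofReal_sub_I, norm_real, Real.norm_of_nonneg hε.le]
end
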